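/- arXiv:1403.2483 — 3 statements merged into one kernel-verified Lean document; each statement's English description precedes it below -/
import Mathlib

section
/- Let (M, d) be a metric space, let x : [0,T] → M be a path with length c(x) computed as the supremum over partitions of sums of consecutive distances, let 0 = τ₁ < τ₂ < ... < τ_M = T be a partition, and let y₁,...,y_M be points with d(y_m, x(τ_m)) ≤ ρ for all m, such that more than a (1−α) fraction of the indices m satisfy d(y_m, x(τ_m)) ≤ βρ for some β ∈ (0,1) and α ∈ (0,1). Then the sum ∑_{m=1}^{M−1} d(y_m, y_{m+1}) is at most c(x) + 2Mρ(β + α − αβ). -/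
open Finset

/-! If every waypoint `y m` is within `ρ` of `x (τ m)` and all but an `α` fraction are within
`β ρ`, the total deviation `∑ d(y m, x (τ m))` is at most `M ρ (β + α (1 - β))`. By the triangle
inequality each leg `d(y m, y (m+1))` exceeds the corresponding leg of `x` by at most the
deviations at its two endpoints, so the waypoint path costs at most the length of `x` plus twice
the total deviation. -/

theorem Finset.sum_le_card_mul_of_card_filter_le {ι : Type*} (s : Finset ι) (e : ι → ℝ)
    {ρ α β : ℝ} (hρ : 0 ≤ ρ) (hβ : β ≤ 1) (he : ∀ i ∈ s, e i ≤ ρ)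
    (hfrac : (#(s.filter fun i => ¬ e i ≤ β * ρ) : ℝ) ≤ α * #s) :
    ∑ i ∈ s, e i ≤ #s * ρ * (β + α - α * β) := by
  classical
  set B := s.filter fun i => ¬ e i ≤ β * ρ
  have hB : B ⊆ s := filter_subset _ _
  have hbad : ∑ i ∈ B, e i ≤ #B * ρ := by
    simpa using sum_le_card_nsmul B e ρ fun i hi => he i (hB hi)
  have hgood : ∑ i ∈ s \ B, e i ≤ (#s - #B) * (β * ρ) := by
    have := sum_le_card_nsmul (s \ B) e (β * ρ) fun i hi => by
      simp only [B, mem_sdiff, mem_filter, not_and, not_not] at hi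
      exact hi.2 hi.1
    simpa [card_sdiff_of_subset hB, Nat.cast_sub (card_le_card hB)] using this
  have hslack : #B * ((1 - β) * ρ) ≤ α * #s * ((1 - β) * ρ) :=
    mul_le_mul_of_nonneg_right hfrac (mul_nonneg (by linarith) hρ)
  rw [← sum_sdiff hB]
  linarith

theorem sum_dist_succ_le_add_two_mul_sum_dist {X : Type*} [PseudoMetricSpace X]
    (p q : ℕ → X) (n : ℕ) :
    ∑ i ∈ range n, dist (q i) (q (i + 1))
      ≤ ∑ i ∈ range n, dist (p i) (p (i + 1)) + 2 * ∑ i ∈ range (n + 1), dist (q i) (p i) := by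
  have hleg : ∀ i, dist (q i) (q (i + 1))
      ≤ dist (q i) (p i) + dist (p i) (p (i + 1)) + dist (q (i + 1)) (p (i + 1)) := fun i => by
    simpa only [dist_comm (p (i + 1))] using dist_triangle4 (q i) (p i) (p (i + 1)) (q (i + 1))
  have hnonneg : 0 ≤ dist (q 0) (p 0) + dist (q n) (p n) := by positivity
  calc ∑ i ∈ range n, dist (q i) (q (i + 1))
      ≤ ∑ i ∈ range n, (dist (q i) (p i) + dist (p i) (p (i + 1))
          + dist (q (i + 1)) (p (i + 1))) := sum_le_sum fun i _ => hleg i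
    _ ≤ _ := by
      rw [sum_add_distrib, sum_add_distrib, two_mul]
      nth_rw 1 [sum_range_succ]
      rw [sum_range_succ']
      linarith

theorem waypoint_cost_bound_general
    {X : Type*} [MetricSpace X] (M : ℕ) (hM : 1 ≤ M)
    (x : ℝ → X) (τ : ℕ → ℝ)
    (c ρ α β : ℝ)
    (hβ : β ∈ Set.Ioo (0 : ℝ) 1)
    (hc : ∑ m ∈ Finset.range (M - 1), dist (x (τ m)) (x (τ (m + 1))) ≤ c)
    (y : ℕ → X)
    (hy : ∀ m < M, dist (y m) (x (τ m)) ≤ ρ)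
    (hfrac : (((Finset.range M).filter
        (fun m => ¬ dist (y m) (x (τ m)) ≤ β * ρ)).card : ℝ) ≤ α * M) :
    ∑ m ∈ Finset.range (M - 1), dist (y m) (y (m + 1))
      ≤ c + 2 * M * ρ * (β + α - α * β) := by
  have hρ : 0 ≤ ρ := dist_nonneg.trans (hy 0 hM)
  have hdev := sum_le_card_mul_of_card_filter_le (range M) (fun m => dist (y m) (x (τ m)))
    hρ hβ.2.le (fun m hm => hy m (mem_range.1 hm)) (by simpa using hfrac)
  obtain ⟨n, rfl⟩ := Nat.exists_eq_add_of_le' hM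
  rw [card_range] at hdev
  rw [Nat.add_sub_cancel] at hc ⊢
  have hpath := sum_dist_succ_le_add_two_mul_sum_dist (fun m => x (τ m)) y n
  linarith

/-- Lemma 3 (waypoint cost bound): if waypoints `y m` lie within sub-Riemannian
distance `ρ` of the reference points `x (τ m)` along a path of length `c`, and at
most an `α` fraction of them are farther than `β * ρ`, then the cost of the path
sequentially connecting the waypoints is at most `c + 2 M ρ (β + α - α β)`. -/
theorem waypoint_cost_bound
    {X : Type*} [MetricSpace X] (M : ℕ) (hM : 1 ≤ M)
    (x : ℝ → X) (τ : ℕ → ℝ) (T : ℝ)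
    (hτ0 : τ 0 = 0) (hτT : τ (M - 1) = T)
    (hτmono : ∀ m, m + 1 < M → τ m < τ (m + 1))
    (c ρ α β : ℝ)
    (hα : α ∈ Set.Ioo (0 : ℝ) 1) (hβ : β ∈ Set.Ioo (0 : ℝ) 1)
    (hc : ∑ m ∈ Finset.range (M - 1), dist (x (τ m)) (x (τ (m + 1))) ≤ c)
    (y : ℕ → X)
    (hy : ∀ m < M, dist (y m) (x (τ m)) ≤ ρ)
    (hfrac : (((Finset.range M).filter
        (fun m => ¬ dist (y m) (x (τ m)) ≤ β * ρ)).card : ℝ) ≤ α * M) :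
    ∑ m ∈ Finset.range (M - 1), dist (y m) (y (m + 1))
      ≤ c + 2 * M * ρ * (β + α - α * β) :=
  waypoint_cost_bound_general M hM x τ c ρ α β hβ hc y hy hfrac
end

section
/- Let d be a metric on a subset M ⊂ ℝⁿ such that d(x,y) ≥ ‖x − y‖ for all x, y (d dominates the Euclidean metric), and suppose for a fixed x₀ there exist constants A > 0 and integer s ≥ 1 and a neighborhood where d(x₀, x) ≤ A · max_i |z_i(x)|^{1/w_i} with w_i ≤ s, and each |z_i(x)| ≤ ‖x₀−x‖ + C‖x₀−x‖² for some C. Then there exists θ > 0 such that for all x with ‖x₀ − x‖ ≤ θ, one has ‖x₀ − x‖ ≤ d(x₀, x) ≤ 2A ‖x₀ − x‖^{1/s}. -/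
/-!
Domination gives the lower bound. For the upper bound, once `‖x₀ - x‖ = r` is so small that
`C r ≤ 1` and `2 r ≤ 1`, every coordinate satisfies `|zᵢ(x)| ≤ 2 r ≤ 1`; on `[0, 1]` the power
`t ↦ t ^ (1 / wᵢ)` is dominated by `t ↦ t ^ (1 / s)` because `wᵢ ≤ s`, and `2 ^ (1 / s) ≤ 2`.
-/

open Finset

namespace Real

theorem rpow_le_two_mul_rpow_of_le_two_mul {t r p q : ℝ} (ht : 0 ≤ t) (htr : t ≤ 2 * r)
    (hr : 2 * r ≤ 1) (hq : 0 ≤ q) (hqp : q ≤ p) (hq1 : q ≤ 1) : t ^ p ≤ 2 * r ^ q := by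
  have hr0 : 0 ≤ r := by linarith
  calc t ^ p ≤ (2 * r) ^ p := rpow_le_rpow ht htr (hq.trans hqp)
    _ ≤ (2 * r) ^ q := rpow_le_rpow_of_exponent_ge' (by positivity) hr hq hqp
    _ = 2 ^ q * r ^ q := mul_rpow zero_le_two hr0
    _ ≤ 2 * r ^ q := by
      gcongr
      exact rpow_le_self_of_one_le one_le_two hq1

end Real

/-- Distance comparison lemma: if a metric `d` on a subset of `ℝⁿ` dominates the
Euclidean distance, and near `x₀` satisfies `d(x₀,x) ≤ A maxᵢ |zᵢ(x)|^{1/wᵢ}` in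
privileged coordinates `z` whose weights `wᵢ ≤ s` and whose components satisfy
`|zᵢ(x)| ≤ ‖x₀-x‖ + C‖x₀-x‖²`, then for some `θ > 0` and all `‖x₀-x‖ ≤ θ`,
`‖x₀-x‖ ≤ d(x₀,x) ≤ 2A‖x₀-x‖^{1/s}`. -/
theorem distance_comparison
    (n : ℕ) (hn : 0 < n)
    (Mset : Set (EuclideanSpace ℝ (Fin n))) (d : EuclideanSpace ℝ (Fin n) → EuclideanSpace ℝ (Fin n) → ℝ)
    (hdom : ∀ x ∈ Mset, ∀ y ∈ Mset, ‖x - y‖ ≤ d x y)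
    (x₀ : EuclideanSpace ℝ (Fin n)) (hx₀ : x₀ ∈ Mset)
    (z : EuclideanSpace ℝ (Fin n) → Fin n → ℝ)
    (w : Fin n → ℕ) (s : ℕ) (hs : 1 ≤ s) (hw : ∀ i, 1 ≤ w i ∧ w i ≤ s)
    (A C : ℝ) (hA : 0 < A) (hC : 0 ≤ C)
    (ε : ℝ) (hε : 0 < ε)
    (hball : ∀ x ∈ Mset, ‖x₀ - x‖ ≤ ε →
      d x₀ x ≤ A * (Finset.univ.sup' (Finset.univ_nonempty_iff.mpr ⟨⟨0, hn⟩⟩)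
        (fun i => |z x i| ^ ((w i : ℝ))⁻¹)))
    (hcoord : ∀ x ∈ Mset, ∀ i, |z x i| ≤ ‖x₀ - x‖ + C * ‖x₀ - x‖ ^ 2) :
    ∃ θ > 0, ∀ x ∈ Mset, ‖x₀ - x‖ ≤ θ →
      ‖x₀ - x‖ ≤ d x₀ x ∧ d x₀ x ≤ 2 * A * ‖x₀ - x‖ ^ ((s : ℝ))⁻¹ := by
  refine ⟨min ε (1 / (C + 2)), by positivity, fun x hx hxθ => ⟨hdom x₀ hx₀ x hx, ?_⟩⟩
  set r := ‖x₀ - x‖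
  have hr0 : 0 ≤ r := norm_nonneg _
  have hrC : r * (C + 2) ≤ 1 := (le_div_iff₀ (by positivity)).mp (hxθ.trans (min_le_right _ _))
  have hz : ∀ i, |z x i| ≤ 2 * r := fun i => (hcoord x hx i).trans (by nlinarith)
  have hcoord_pow : ∀ i, |z x i| ^ ((w i : ℝ))⁻¹ ≤ 2 * r ^ ((s : ℝ))⁻¹ := fun i =>
    Real.rpow_le_two_mul_rpow_of_le_two_mul (abs_nonneg _) (hz i) (by nlinarith) (by positivity)
      (inv_anti₀ (by exact_mod_cast (hw i).1) (by exact_mod_cast (hw i).2))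
      (inv_le_one_of_one_le₀ (by exact_mod_cast hs))
  calc d x₀ x ≤ A * (Finset.univ.sup' (Finset.univ_nonempty_iff.mpr ⟨⟨0, hn⟩⟩)
        (fun i => |z x i| ^ ((w i : ℝ))⁻¹)) := hball x hx (hxθ.trans (min_le_left _ _))
    _ ≤ A * (2 * r ^ ((s : ℝ))⁻¹) := by gcongr; exact sup'_le _ _ fun i _ => hcoord_pow i
    _ = 2 * A * r ^ ((s : ℝ))⁻¹ := by ring
end

section
/- Let S₁,...,S_M be disjoint measurable subsets of a finite-measure set F with μ(S_m) = μ(S₁) ≥ ((2 + log(1/α))/n) e² μ(F) for α ∈ (0,1), and let V be n i.i.d. uniform samples from F. Define K_n = #{m : S_m ∩ V = ∅}. Then P(K_n ≥ αM) ≤ e^{−αM}/(1 − e^{−n}). -/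
/-!
Let `t = ⌈αM⌉`. If at least `αM` of the cells `S m` receive no sample, then some `t` of them
do, so by a union bound over the `t`-subsets `T` the probability is at most `C(M, t)` times the
largest probability that all `n` samples avoid `⋃ m ∈ T, S m`. That set has normalised mass at
least `t r` with `r = (2 + log(1/α)) e² / n`, so all samples avoid it with probability at most
`(1 - t r)ⁿ ≤ exp(-n t r) ≤ (α e⁻²)ᵗ`. Finally `C(M, t) ≤ (e M / t)ᵗ` turns the bound into
`(α M / (e t))ᵗ ≤ e⁻ᵗ ≤ e^{-αM}`.
-/

open scoped Classical

open MeasureTheory ProbabilityTheory ENNReal Real Finset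

theorem Nat.choose_le_exp_one_mul_div_pow (n k : ℕ) :
    (n.choose k : ℝ) ≤ (exp 1 * n / k) ^ k := by
  rcases k.eq_zero_or_pos with rfl | hk
  · simp
  have hk' : (0 : ℝ) < k := by exact_mod_cast hk
  have hpow : (k : ℝ) ^ k ≤ exp k * k.factorial := by
    have := pow_div_factorial_le_exp _ hk'.le k
    rwa [div_le_iff₀ (by positivity)] at this
  calc (n.choose k : ℝ) ≤ n ^ k / k.factorial := Nat.choose_le_pow_div k n
    _ ≤ exp k * n ^ k / k ^ k := by
        rw [div_le_div_iff₀ (by positivity) (by positivity)]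
        calc (n : ℝ) ^ k * k ^ k ≤ n ^ k * (exp k * k.factorial) := by gcongr
          _ = _ := by ring
    _ = (exp 1 * n / k) ^ k := by rw [div_pow, mul_pow, ← exp_nat_mul, mul_one]

theorem Nat.choose_mul_exp_neg_le {α s : ℝ} (hα : 0 < α) {M t : ℕ} (ht : α * M ≤ t)
    (hs : t * (2 + Real.log (1 / α)) ≤ s) :
    (M.choose t : ℝ) * exp (-s) ≤ exp (-(α * M)) := by
  have hexp : exp (-(t * (2 + Real.log (1 / α)))) = (α / exp 2) ^ t := by
    rw [← exp_log hα, ← exp_sub, ← exp_nat_mul, one_div, Real.log_inv, exp_log hα]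
    congr 1
    ring
  have hratio : exp 1 * M / t * (α / exp 2) = α * M / t * exp (-1) := by
    rw [show exp (-1) = exp 1 / exp 2 by rw [← exp_sub]; norm_num]
    ring
  calc (M.choose t : ℝ) * exp (-s)
      ≤ (exp 1 * M / t) ^ t * (α / exp 2) ^ t := by
        rw [← hexp]
        gcongr
        exact Nat.choose_le_exp_one_mul_div_pow M t
    _ = (α * M / t * exp (-1)) ^ t := by rw [← mul_pow, hratio]
    _ ≤ exp (-1) ^ t := by
        gcongr
        exact mul_le_of_le_one_left (exp_pos _).le (div_le_one_of_le₀ ht t.cast_nonneg)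
    _ = exp (-t) := by rw [← exp_nat_mul]; ring_nf
    _ ≤ exp (-(α * M)) := exp_le_exp.mpr (neg_le_neg ht)

theorem ProbabilityTheory.le_cond_apply_of_mul_le {Ω : Type*} [MeasurableSpace Ω]
    {μ : Measure Ω} {s t : Set Ω} {c : ℝ≥0∞} (hts : t ⊆ s) (hs0 : μ s ≠ 0) (hs : μ s ≠ ∞)
    (hc : c * μ s ≤ μ t) : c ≤ μ[t | s] := by
  rw [cond, Measure.smul_apply, Measure.restrict_eq_self _ hts, smul_eq_mul,
    ← ENNReal.mul_le_iff_le_inv hs0 hs, mul_comm]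
  exact hc

namespace MeasureTheory

variable {X ι : Type*} [Fintype ι] {n : ℕ}

/-- `#(emptyCells S ω)` is the paper's `K_n`. -/
noncomputable def emptyCells (S : ι → Set X) (ω : Fin n → X) : Finset ι :=
  univ.filter fun m => ∀ j, ω j ∉ S m

theorem setOf_le_card_emptyCells_subset (S : ι → Set X) (t : ℕ) :
    {ω : Fin n → X | t ≤ #(emptyCells S ω)} ⊆
      ⋃ T ∈ powersetCard t univ, Set.univ.pi fun _ => (⋃ m ∈ T, S m)ᶜ := by
  intro ω hω
  obtain ⟨T, hTsub, hTcard⟩ := exists_subset_card_eq hω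
  refine Set.mem_biUnion (mem_powersetCard_univ.mpr hTcard) fun j _ => ?_
  simp only [Set.mem_compl_iff, Set.mem_iUnion, not_exists]
  exact fun m hm => (mem_filter.mp (hTsub hm)).2 j

variable [MeasurableSpace X]

theorem measure_pi_compl_le_exp (μ : Measure X) [IsProbabilityMeasure μ] {A : Set X}
    (hA : MeasurableSet A) {q : ℝ} (hq : 0 ≤ q) (hqA : ENNReal.ofReal q ≤ μ A) :
    Measure.pi (fun _ : Fin n => μ) (Set.univ.pi fun _ => Aᶜ) ≤
      ENNReal.ofReal (exp (-(n * q))) := by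
  have hcompl : μ Aᶜ ≤ ENNReal.ofReal (exp (-q)) := calc
    μ Aᶜ = 1 - μ A := prob_compl_eq_one_sub hA
    _ ≤ 1 - ENNReal.ofReal q := tsub_le_tsub_left hqA 1
    _ = ENNReal.ofReal (1 - q) := by rw [ENNReal.ofReal_sub 1 hq, ENNReal.ofReal_one]
    _ ≤ ENNReal.ofReal (exp (-q)) := ENNReal.ofReal_le_ofReal (one_sub_le_exp_neg q)
  calc Measure.pi (fun _ : Fin n => μ) (Set.univ.pi fun _ => Aᶜ) = μ Aᶜ ^ n := by
        rw [Measure.pi_pi, prod_const, card_univ, Fintype.card_fin]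
    _ ≤ ENNReal.ofReal (exp (-q)) ^ n := by gcongr
    _ = ENNReal.ofReal (exp (-(n * q))) := by
        rw [← ENNReal.ofReal_pow (exp_pos _).le, ← exp_nat_mul]
        ring_nf

theorem measure_pi_le_card_emptyCells_le (μ : Measure X) [IsProbabilityMeasure μ]
    {S : ι → Set X} (hSmeas : ∀ m, MeasurableSet (S m))
    (hSdisj : Pairwise fun m m' => Disjoint (S m) (S m'))
    {r : ℝ} (hr : 0 ≤ r) (hSr : ∀ m, ENNReal.ofReal r ≤ μ (S m)) (t : ℕ) :
    Measure.pi (fun _ : Fin n => μ) {ω | t ≤ #(emptyCells S ω)} ≤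
      ENNReal.ofReal ((Fintype.card ι).choose t * exp (-(n * (t * r)))) := by
  have hT : ∀ T ∈ powersetCard t (univ : Finset ι),
      Measure.pi (fun _ : Fin n => μ) (Set.univ.pi fun _ => (⋃ m ∈ T, S m)ᶜ) ≤
        ENNReal.ofReal (exp (-(n * (t * r)))) := by
    intro T hT
    refine measure_pi_compl_le_exp μ (T.measurableSet_biUnion fun m _ => hSmeas m)
      (by positivity) ?_
    rw [measure_biUnion_finset (fun m _ m' _ h => hSdisj h) fun m _ => hSmeas m]
    calc ENNReal.ofReal (t * r) = ∑ _m ∈ T, ENNReal.ofReal r := by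
          rw [sum_const, mem_powersetCard_univ.mp hT, nsmul_eq_mul,
            ENNReal.ofReal_mul t.cast_nonneg, ENNReal.ofReal_natCast]
      _ ≤ ∑ m ∈ T, μ (S m) := sum_le_sum fun m _ => hSr m
  calc Measure.pi (fun _ : Fin n => μ) {ω | t ≤ #(emptyCells S ω)}
      ≤ ∑ T ∈ powersetCard t univ,
          Measure.pi (fun _ : Fin n => μ) (Set.univ.pi fun _ => (⋃ m ∈ T, S m)ᶜ) :=
        (measure_mono (setOf_le_card_emptyCells_subset S t)).trans
          (measure_biUnion_finset_le _ _)
    _ ≤ ∑ _T ∈ powersetCard t (univ : Finset ι),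
          ENNReal.ofReal (exp (-(n * (t * r)))) := sum_le_sum hT
    _ = _ := by
        rw [sum_const, card_powersetCard, card_univ, nsmul_eq_mul,
          ENNReal.ofReal_mul (by positivity), ENNReal.ofReal_natCast]

end MeasureTheory

theorem small_ball_sampling_general
    {k : ℕ} (n M : ℕ) (hn : 1 ≤ n) (α : ℝ) (hα : α ∈ Set.Ioo (0 : ℝ) 1)
    (F : Set (Fin k → ℝ))
    (hF0 : 0 < volume F) (hFfin : volume F < ⊤)
    (S : Fin M → Set (Fin k → ℝ)) (hSmeas : ∀ m, MeasurableSet (S m))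
    (hSsub : ∀ m, S m ⊆ F)
    (hSdisj : ∀ m m', m ≠ m' → Disjoint (S m) (S m'))
    (hSvol : ∀ m,
      ENNReal.ofReal (((2 + Real.log (1 / α)) / n) * Real.exp 2) * volume F
        ≤ volume (S m)) :
    (Measure.pi fun _ : Fin n => (volume F)⁻¹ • volume.restrict F)
        {ω | α * M ≤
          ((Finset.univ.filter (fun m : Fin M => ∀ i, ω i ∉ S m)).card : ℝ)}
      ≤ ENNReal.ofReal (Real.exp (-(α * M)) / (1 - Real.exp (-(n : ℝ)))) := by
  obtain ⟨hα0, hα1⟩ := hα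
  have : IsProbabilityMeasure (volume[|F]) :=
    cond_isProbabilityMeasure_of_finite hF0.ne' hFfin.ne
  have hL : 0 ≤ Real.log (1 / α) := log_nonneg (one_le_one_div hα0 hα1.le)
  set r := (2 + Real.log (1 / α)) / n * exp 2
  set t := ⌈α * M⌉₊
  have hrate : t * (2 + Real.log (1 / α)) ≤ n * (t * r) := calc
    _ ≤ t * (2 + Real.log (1 / α)) * exp 2 :=
      le_mul_of_one_le_right (by positivity) (one_le_exp zero_le_two)
    _ = n * (t * r) := by
      simp only [r]
      field_simp
  have hevent : {ω : Fin n → Fin k → ℝ | α * M ≤ (#(emptyCells S ω) : ℝ)} ⊆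
      {ω | t ≤ #(emptyCells S ω)} := fun ω hω => Nat.ceil_le.mpr hω
  refine (measure_mono (μ := Measure.pi fun _ : Fin n => volume[|F]) hevent).trans <|
    (measure_pi_le_card_emptyCells_le _ hSmeas (fun m m' => hSdisj m m') (by positivity)
      (fun m => le_cond_apply_of_mul_le (hSsub m) hF0.ne' hFfin.ne (hSvol m)) t).trans <|
    ENNReal.ofReal_le_ofReal ?_
  rw [Fintype.card_fin]
  have hdenom : 0 < 1 - exp (-(n : ℝ)) :=
    sub_pos.mpr (exp_lt_one_iff.mpr (neg_lt_zero.mpr (Nat.cast_pos.mpr hn)))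
  exact (Nat.choose_mul_exp_neg_le hα0 (Nat.le_ceil _) hrate).trans <|
    le_div_self (exp_pos _).le hdenom (sub_le_self _ (exp_pos _).le)

/-- Small-ball sampling lemma: for disjoint equal-measure sets
`S 1, …, S M ⊆ F` with `μ(S m) ≥ ((2 + log(1/α))/n) e² μ(F)` and `n` i.i.d.
uniform samples from `F`, the number `K n` of sets containing no sample exceeds
`α M` with probability at most `e^{-αM}/(1 - e^{-n})`. -/
theorem small_ball_sampling
    {k : ℕ} (n M : ℕ) (hn : 1 ≤ n) (α : ℝ) (hα : α ∈ Set.Ioo (0 : ℝ) 1)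
    (F : Set (Fin k → ℝ)) (hFmeas : MeasurableSet F)
    (hF0 : 0 < volume F) (hFfin : volume F < ⊤)
    (S : Fin M → Set (Fin k → ℝ)) (hSmeas : ∀ m, MeasurableSet (S m))
    (hSsub : ∀ m, S m ⊆ F)
    (hSdisj : ∀ m m', m ≠ m' → Disjoint (S m) (S m'))
    (hSeq : ∀ m m', volume (S m) = volume (S m'))
    (hSvol : ∀ m,
      ENNReal.ofReal (((2 + Real.log (1 / α)) / n) * Real.exp 2) * volume F
        ≤ volume (S m)) :
    (Measure.pi fun _ : Fin n => (volume F)⁻¹ • volume.restrict F)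
        {ω | α * M ≤
          ((Finset.univ.filter (fun m : Fin M => ∀ i, ω i ∉ S m)).card : ℝ)}
      ≤ ENNReal.ofReal (Real.exp (-(α * M)) / (1 - Real.exp (-(n : ℝ)))) :=
  small_ball_sampling_general n M hn α hα F hF0 hFfin S hSmeas hSsub hSdisj hSvol
end
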